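/- Let α, ε, δ, γ > 0, let A be a real symmetric positive semidefinite N×N matrix with positive semidefinite square root S, and suppose vᵀ A v ≥ γ ‖v‖² for every v in the range of A. Let x, v, x*, v*, g : ℕ → ℝ^N be sequences such that for every t: g_t + S v*_t = 0 and v*_t lies in the range of A, and such that for every t ≥ 1 the contraction ‖(x_t − x*_t, v_t − v*_t)‖_G ≤ (1+δ)^{-1/2} ‖(x_{t-1} − x*_t, v_{t-1} − v*_t)‖_G holds. Define d_t := ‖x*_{t-1} − x*_t‖ + (√(αε)/√γ) ‖g_t − g_{t-1}‖ for t ≥ 1 and suppose d_max ∈ ℝ satisfies d_t ≤ d_max for all t ≥ 1. Then limsup_{t→∞} ‖(x_t − x*_t, v_t − v*_t)‖_G ≤ d_max / (√(1+δ) − 1). -/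

import Mathlib

/-!
Write `q = (1+δ)^{-1/2}` and `e_t = ‖(x_t − x*_t, v_t − v*_t)‖_G`. The triangle inequality for the
G-norm through `(x*_{t-1}, v*_{t-1})` turns the contraction into
`e_t ≤ q (e_{t-1} + ‖(x*_{t-1} − x*_t, v*_{t-1} − v*_t)‖_G)`. The KKT conditions give
`S (v*_{t-1} − v*_t) = g_t − g_{t-1}`, and on the range of `A = S²` the hypothesis on `A` reads
`‖S w‖ ≥ √γ ‖w‖`, so the drift of the optimal pair has G-norm at most `d_t ≤ d_max`. The affine
recursion `e_t ≤ q e_{t-1} + q d_max` with `q < 1` has limsup at most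
`q d_max / (1 - q) = d_max / (√(1+δ) − 1)`.
-/

open Matrix RealInnerProductSpace Filter

/-- The G-norm of a primal-dual pair `(x, v)`: `‖(x,v)‖_G = (‖x‖² + αε‖v‖²)^{1/2}`. -/
noncomputable def GNorm (α ε : ℝ) {N : ℕ} (x v : EuclideanSpace ℝ (Fin N)) : ℝ :=
  Real.sqrt (‖x‖ ^ 2 + α * ε * ‖v‖ ^ 2)

section GNorm

variable {α ε : ℝ} {N : ℕ}

lemma gNorm_nonneg (a b : EuclideanSpace ℝ (Fin N)) : 0 ≤ GNorm α ε a b :=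
  Real.sqrt_nonneg _

lemma gNorm_eq_norm_toLp (hαε : 0 ≤ α * ε) (a b : EuclideanSpace ℝ (Fin N)) :
    GNorm α ε a b = ‖WithLp.toLp 2 (a, Real.sqrt (α * ε) • b)‖ := by
  rw [GNorm, WithLp.prod_norm_eq_of_L2, WithLp.toLp_fst, WithLp.toLp_snd, norm_smul,
    Real.norm_of_nonneg (Real.sqrt_nonneg _), mul_pow, Real.sq_sqrt hαε]

lemma gNorm_add_le (hαε : 0 ≤ α * ε) (a b a' b' : EuclideanSpace ℝ (Fin N)) :
    GNorm α ε (a + a') (b + b') ≤ GNorm α ε a b + GNorm α ε a' b' := by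
  simp only [gNorm_eq_norm_toLp hαε, smul_add]
  exact norm_add_le (WithLp.toLp 2 (a, _)) (WithLp.toLp 2 (a', _))

lemma gNorm_sub_le_gNorm_sub_add (hαε : 0 ≤ α * ε) (a b c a' b' c' : EuclideanSpace ℝ (Fin N)) :
    GNorm α ε (a - c) (a' - c') ≤ GNorm α ε (a - b) (a' - b') + GNorm α ε (b - c) (b' - c') := by
  simpa using gNorm_add_le hαε (a - b) (a' - b') (b - c) (b' - c')

lemma gNorm_le_norm_add (hαε : 0 ≤ α * ε) (a b : EuclideanSpace ℝ (Fin N)) :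
    GNorm α ε a b ≤ ‖a‖ + Real.sqrt (α * ε) * ‖b‖ := by
  simpa [GNorm, norm_smul, Real.sq_sqrt hαε, mul_pow] using gNorm_add_le hαε a 0 0 b

lemma gNorm_le_norm_add_div_sqrt_mul {γ c : ℝ} (hαε : 0 ≤ α * ε) (hγ : 0 < γ)
    {a b : EuclideanSpace ℝ (Fin N)} (hb : Real.sqrt γ * ‖b‖ ≤ c) :
    GNorm α ε a b ≤ ‖a‖ + Real.sqrt (α * ε) / Real.sqrt γ * c := by
  refine (gNorm_le_norm_add hαε a b).trans (add_le_add_right ?_ _)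
  rw [div_mul_eq_mul_div, le_div_iff₀ (Real.sqrt_pos.mpr hγ), mul_assoc, mul_comm ‖b‖]
  gcongr

end GNorm

section Dual

variable {E : Type*} [NormedAddCommGroup E] [InnerProductSpace ℝ E] [CompleteSpace E]

lemma sqrt_mul_norm_le_norm_apply {T : E →L[ℝ] E} (hT : IsSelfAdjoint T) {γ : ℝ} {w : E}
    (hw : γ * ‖w‖ ^ 2 ≤ ⟪w, (T * T) w⟫) : Real.sqrt γ * ‖w‖ ≤ ‖T w‖ := by
  have hsq : ⟪w, (T * T) w⟫ = ‖T w‖ ^ 2 :=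
    (hT.isSymmetric w (T w)).symm.trans (real_inner_self_eq_norm_sq (T w))
  rw [hsq] at hw
  calc Real.sqrt γ * ‖w‖ = Real.sqrt (γ * ‖w‖ ^ 2) := by
        rw [Real.sqrt_mul' _ (sq_nonneg _), Real.sqrt_sq (norm_nonneg _)]
    _ ≤ Real.sqrt (‖T w‖ ^ 2) := Real.sqrt_le_sqrt hw
    _ = ‖T w‖ := Real.sqrt_sq (norm_nonneg _)

lemma sqrt_mul_norm_sub_le_of_kkt {T : E →L[ℝ] E} (hT : IsSelfAdjoint T) {γ : ℝ}
    {v v' g g' : E} (hquad : γ * ‖v - v'‖ ^ 2 ≤ ⟪v - v', (T * T) (v - v')⟫)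
    (hg : g + T v = 0) (hg' : g' + T v' = 0) :
    Real.sqrt γ * ‖v - v'‖ ≤ ‖g' - g‖ := by
  have hTv : T (v - v') = g' - g := by
    rw [map_sub]
    linear_combination (norm := module) hg - hg'
  exact hTv ▸ sqrt_mul_norm_le_norm_apply hT hquad

end Dual

theorem limsup_le_div_one_sub_of_le_mul_add {e : ℕ → ℝ} {q c : ℝ} (hq0 : 0 ≤ q) (hq1 : q < 1)
    (hbdd : IsBoundedUnder (· ≥ ·) atTop e) (h : ∀ n, e (n + 1) ≤ q * e n + c) :
    limsup e atTop ≤ c / (1 - q) := by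
  obtain ⟨L, hL⟩ : ∃ L, L = c / (1 - q) := ⟨_, rfl⟩
  have hfix : q * L + c = L := by
    rw [hL]
    field_simp [(sub_pos.2 hq1).ne']
    ring
  have hgeo : ∀ n, e n ≤ q ^ n * (e 0 - L) + L := by
    intro n
    induction n with
    | zero => simp
    | succ n ih =>
      calc e (n + 1) ≤ q * e n + c := h n
        _ ≤ q * (q ^ n * (e 0 - L) + L) + c := by gcongr
        _ = q ^ (n + 1) * (e 0 - L) + L := by linear_combination hfix
  have htend : Tendsto (fun n => q ^ n * (e 0 - L) + L) atTop (nhds L) := by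
    simpa using ((tendsto_pow_atTop_nhds_zero_of_lt_one hq0 hq1).mul_const (e 0 - L)).add_const L
  calc limsup e atTop ≤ limsup (fun n => q ^ n * (e 0 - L) + L) atTop :=
        limsup_le_limsup (Eventually.of_forall hgeo) hbdd.isCoboundedUnder_le
          htend.isBoundedUnder_le
    _ = c / (1 - q) := htend.limsup_eq.trans hL

theorem stmt16_general {N : ℕ} (α ε δ γ : ℝ) (hα : 0 < α) (hε : 0 < ε) (hδ : 0 < δ) (hγ : 0 < γ)
    (A S : Matrix (Fin N) (Fin N) ℝ)
    (hS : S.PosSemidef) (hSS : S * S = A)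
    (hquad : ∀ v : EuclideanSpace ℝ (Fin N),
      (∃ w, Matrix.toEuclideanCLM (𝕜 := ℝ) A w = v) →
      γ * ‖v‖ ^ 2 ≤ ⟪v, Matrix.toEuclideanCLM (𝕜 := ℝ) A v⟫)
    (x v xs vs g : ℕ → EuclideanSpace ℝ (Fin N))
    (hkkt : ∀ t, g t + Matrix.toEuclideanCLM (𝕜 := ℝ) S (vs t) = 0)
    (hrange : ∀ t, ∃ u, Matrix.toEuclideanCLM (𝕜 := ℝ) A u = vs t)
    (hcontr : ∀ t : ℕ, 1 ≤ t →
      GNorm α ε (x t - xs t) (v t - vs t) ≤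
        (1 / Real.sqrt (1 + δ)) * GNorm α ε (x (t - 1) - xs t) (v (t - 1) - vs t))
    (dmax : ℝ)
    (hdmax : ∀ t : ℕ, 1 ≤ t →
      ‖xs (t - 1) - xs t‖ +
        (Real.sqrt (α * ε) / Real.sqrt γ) * ‖g t - g (t - 1)‖ ≤ dmax) :
    limsup (fun t : ℕ => GNorm α ε (x t - xs t) (v t - vs t)) atTop ≤
      dmax / (Real.sqrt (1 + δ) - 1) := by
  have hαε : 0 ≤ α * ε := by positivity
  have hs1 : 1 < Real.sqrt (1 + δ) := by
    rw [Real.lt_sqrt zero_le_one]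
    linarith
  set q := 1 / Real.sqrt (1 + δ)
  have hT : IsSelfAdjoint (Matrix.toEuclideanCLM (𝕜 := ℝ) S) := hS.1.isSelfAdjoint.map _
  have hdrift : ∀ t, GNorm α ε (xs t - xs (t + 1)) (vs t - vs (t + 1)) ≤ dmax := by
    intro t
    have hquad' := hquad (vs t - vs (t + 1)) <| by
      obtain ⟨u, hu⟩ := hrange t
      obtain ⟨u', hu'⟩ := hrange (t + 1)
      exact ⟨u - u', by rw [map_sub, hu, hu']⟩
    rw [← hSS, map_mul] at hquad'
    exact (gNorm_le_norm_add_div_sqrt_mul hαε hγ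
      (sqrt_mul_norm_sub_le_of_kkt hT hquad' (hkkt t) (hkkt (t + 1)))).trans
      (hdmax (t + 1) le_add_self)
  have hstep : ∀ t, GNorm α ε (x (t + 1) - xs (t + 1)) (v (t + 1) - vs (t + 1)) ≤
      q * GNorm α ε (x t - xs t) (v t - vs t) + q * dmax := by
    intro t
    rw [← mul_add]
    refine (hcontr (t + 1) le_add_self).trans (mul_le_mul_of_nonneg_left ?_ (by positivity))
    exact (gNorm_sub_le_gNorm_sub_add hαε _ (xs t) _ _ (vs t) _).trans
      (add_le_add_right (hdrift t) _)
  calc _ ≤ q * dmax / (1 - q) :=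
        limsup_le_div_one_sub_of_le_mul_add (e := fun t => GNorm α ε (x t - xs t) (v t - vs t))
          (by positivity) ((div_lt_one (by linarith)).2 hs1)
          (isBoundedUnder_of ⟨0, fun _ => gNorm_nonneg _ _⟩) hstep
    _ = dmax / (Real.sqrt (1 + δ) - 1) := by
      have : Real.sqrt (1 + δ) - 1 ≠ 0 := by linarith
      simp only [q]
      field_simp

/-- Theorem 2 of the paper: under the KKT conditions, the quadratic-form lower bound on
the range of `A = S²`, the per-step contraction with rate `(1+δ)^{-1/2}`, and a uniform
bound `d_max` on the optimality drift `d_t`, the primal-dual G-norm error of dynamic ESOM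
satisfies `limsup_{t→∞} ‖u_t − u*_t‖_G ≤ d_max / (√(1+δ) − 1)`. -/
theorem stmt16 {N : ℕ} (α ε δ γ : ℝ) (hα : 0 < α) (hε : 0 < ε) (hδ : 0 < δ) (hγ : 0 < γ)
    (A S : Matrix (Fin N) (Fin N) ℝ)
    (hA : A.PosSemidef) (hS : S.PosSemidef) (hSS : S * S = A)
    (hquad : ∀ v : EuclideanSpace ℝ (Fin N),
      (∃ w, Matrix.toEuclideanCLM (𝕜 := ℝ) A w = v) →
      γ * ‖v‖ ^ 2 ≤ ⟪v, Matrix.toEuclideanCLM (𝕜 := ℝ) A v⟫)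
    (x v xs vs g : ℕ → EuclideanSpace ℝ (Fin N))
    (hkkt : ∀ t, g t + Matrix.toEuclideanCLM (𝕜 := ℝ) S (vs t) = 0)
    (hrange : ∀ t, ∃ u, Matrix.toEuclideanCLM (𝕜 := ℝ) A u = vs t)
    (hcontr : ∀ t : ℕ, 1 ≤ t →
      GNorm α ε (x t - xs t) (v t - vs t) ≤
        (1 / Real.sqrt (1 + δ)) * GNorm α ε (x (t - 1) - xs t) (v (t - 1) - vs t))
    (dmax : ℝ)
    (hdmax : ∀ t : ℕ, 1 ≤ t →
      ‖xs (t - 1) - xs t‖ +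
        (Real.sqrt (α * ε) / Real.sqrt γ) * ‖g t - g (t - 1)‖ ≤ dmax) :
    limsup (fun t : ℕ => GNorm α ε (x t - xs t) (v t - vs t)) atTop ≤
      dmax / (Real.sqrt (1 + δ) - 1) :=
  stmt16_general α ε δ γ hα hε hδ hγ A S hS hSS hquad x v xs vs g hkkt hrange hcontr dmax hdmax
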